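/- arXiv:1604.05655 — 3 statements merged into one kernel-verified Lean document; each statement's English description precedes it below -/
import Mathlib

section
/- Let S be a finite nonempty type with d = |S| elements, let N be an index type with a bijection b : N → S×S, and write b(n) = (j_n, j'_n). Let A_n = |j_n⟩⟨j'_n| (the matrix with a single 1 entry at position (j_n, j'_n)), let χ : N × N → ℂ, and define the map ℰ(ρ) = Σ_{m,n} χ_{mn} A_m ρ A_n† on S×S matrices. Define the Jamiolkowski state ρ_ℰ = (1/d) Σ_{j,k∈S} (|j⟩⟨k|) ⊗ ℰ(|j⟩⟨k|), a matrix indexed by (S×S)×(S×S). Then for all m, n ∈ N: the entry of ρ_ℰ at row index (j'_m, j_m) and column index (j'_n, j_n) equals χ_{mn}/d. (Thus every element of the process matrix χ is mapped to a unique element of ρ_ℰ.) -/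
/-!
Since `|j⟩⟨j'| ρ |k'⟩⟨k| = ρ_{j'k'} |j⟩⟨k|`, the `(x, y)` entry of `ℰ(|a⟩⟨c|)` is
`χ(b⁻¹(x, a), b⁻¹(y, c))`; and tensoring with the matrix units `|j⟩⟨k|` places `ℰ(|a⟩⟨c|)_{xy}`
at position `((a, x), (c, y))` of `d • ρ_ℰ`.
-/

open Complex Matrix Kronecker

namespace Matrix

variable {R S T U N : Type*} [Fintype S] [DecidableEq S]

theorem sum_single_kronecker_apply [Semiring R] (F : S → S → Matrix T U R) (a c : S) (x : T)
    (y : U) : (∑ j, ∑ k, single j k (1 : R) ⊗ₖ F j k) (a, x) (c, y) = F a c x y := by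
  simp [sum_apply, single_apply, ite_and]

theorem sum_smul_single_mul_single_mul_conjTranspose_single_apply [Semiring R] [StarRing R]
    [Fintype N] [DecidableEq T] [Fintype T] (b : N ≃ S × T) (χ : N × N → R) (j k : T) (x y : S) :
    (∑ m, ∑ n, χ (m, n) • (single (b m).1 (b m).2 (1 : R) * single j k (1 : R) *
      (single (b n).1 (b n).2 (1 : R))ᴴ)) x y = χ (b.symm (x, j), b.symm (y, k)) := by
  simp only [← b.symm.sum_comp (fun m => ∑ n, _), ← b.symm.sum_comp (fun n => _),
    Equiv.apply_symm_apply]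
  simp [sum_apply, single_apply, Fintype.sum_prod_type, ite_and]

end Matrix

theorem jamiolkowski_process_matrix_general
    (S : Type*) [Fintype S] [DecidableEq S]
    (d : ℕ)
    (N : Type*) [Fintype N] (b : N ≃ S × S)
    (A : N → Matrix S S ℂ)
    (hA : ∀ n : N, A n = Matrix.single (b n).1 (b n).2 1)
    (χ : N × N → ℂ)
    (ℰ : Matrix S S ℂ → Matrix S S ℂ)
    (hℰ : ∀ ρ, ℰ ρ = ∑ m : N, ∑ n : N, χ (m, n) • (A m * ρ * (A n)ᴴ))
    (ρℰ : Matrix ((S × S)) ((S × S)) ℂ)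
    (hρℰ : ρℰ = (1 / (d : ℂ)) •
      ∑ j : S, ∑ k : S,
        (Matrix.single j k (1 : ℂ)) ⊗ₖ ℰ (Matrix.single j k 1)) :
    ∀ m n : N, ρℰ ((b m).2, (b m).1) ((b n).2, (b n).1) = χ (m, n) / d := by
  intro m n
  rw [hρℰ, Matrix.smul_apply, sum_single_kronecker_apply, hℰ]
  simp only [hA, sum_smul_single_mul_single_mul_conjTranspose_single_apply, Prod.mk.eta,
    Equiv.symm_apply_apply, smul_eq_mul, one_div_mul_eq_div]

/-- the Jamiolkowski isomorphism. If the operator basis consists of the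
matrix units `A_n = |j_n⟩⟨j'_n|` indexed by a bijection `n ↦ (j_n, j'_n)`, then each
entry of the process matrix `χ` appears (divided by `d`) as a unique entry of the
Jamiolkowski state `ρ_ℰ = (1/d) Σ_{j,k} |j⟩⟨k| ⊗ ℰ(|j⟩⟨k|)`. -/
theorem jamiolkowski_process_matrix
    (S : Type*) [Fintype S] [Nonempty S] [DecidableEq S]
    (d : ℕ) (hd : d = Fintype.card S)
    (N : Type*) [Fintype N] (b : N ≃ S × S)
    (A : N → Matrix S S ℂ)
    (hA : ∀ n : N, A n = Matrix.single (b n).1 (b n).2 1)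
    (χ : N × N → ℂ)
    (ℰ : Matrix S S ℂ → Matrix S S ℂ)
    (hℰ : ∀ ρ, ℰ ρ = ∑ m : N, ∑ n : N, χ (m, n) • (A m * ρ * (A n)ᴴ))
    (ρℰ : Matrix ((S × S)) ((S × S)) ℂ)
    (hρℰ : ρℰ = (1 / (d : ℂ)) •
      ∑ j : S, ∑ k : S,
        (Matrix.single j k (1 : ℂ)) ⊗ₖ ℰ (Matrix.single j k 1)) :
    ∀ m n : N, ρℰ ((b m).2, (b m).1) ((b n).2, (b n).1) = χ (m, n) / d :=
  jamiolkowski_process_matrix_general S d N b A hA χ ℰ hℰ ρℰ hρℰ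
end

section
/- Let Q = (1/√2)·[[1,0,0,i],[0,i,1,0],[0,i,−1,0],[1,0,0,−i]] (the Bell/magic basis change matrix). For any u₁, u₂ ∈ SU(2) (2×2 complex unitary matrices with determinant 1), the 4×4 matrix Q† (u₁ ⊗ u₂) Q has all real entries and is orthogonal (its transpose times itself is the identity). That is, local single-qubit operations correspond to real orthogonal matrices in the Bell basis. -/
open Complex Matrix Kronecker

/-!
For `u ∈ SU(2)` we have `uᴴ = adjugate u`, and conjugating by the Pauli matrix `Y` turns `u`
into the transposed adjugate; hence entrywise conjugation acts on `SU(2)` as `u ↦ Y u Y`, and on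
`u₁ ⊗ u₂` as conjugation by `Y ⊗ Y`. The Bell basis matrix satisfies `conj Q = -(Y ⊗ Y) Q`, so
the two factors of `Y ⊗ Y` cancel in `Qᴴ (u₁ ⊗ u₂) Q`, which is therefore real. Being also
unitary, it is orthogonal.
-/

noncomputable def Q : Matrix (Fin 4) (Fin 4) ℂ :=
  (1 / (Real.sqrt 2 : ℂ)) •
    !![1, 0, 0, Complex.I;
       0, Complex.I, 1, 0;
       0, Complex.I, -1, 0;
       1, 0, 0, -Complex.I]

noncomputable def kron2 (A B : Matrix (Fin 2) (Fin 2) ℂ) : Matrix (Fin 4) (Fin 4) ℂ :=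
  Matrix.reindex finProdFinEquiv finProdFinEquiv (A ⊗ₖ B)

namespace Matrix

theorem transpose_eq_conjTranspose_of_map_star_eq {m n α : Type*} [Star α] {M : Matrix m n α}
    (h : M.map star = M) : Mᵀ = Mᴴ := by
  conv_lhs => rw [← h]
  rfl

variable {n α : Type*} [Fintype n] [DecidableEq n] [CommRing α] [StarRing α]

theorem conjTranspose_eq_adjugate_of_mem_unitaryGroup {u : Matrix n n α}
    (hu : u ∈ unitaryGroup n α) (hdet : u.det = 1) : uᴴ = adjugate u :=
  calc uᴴ = uᴴ * (u * adjugate u) := by rw [mul_adjugate, hdet, one_smul, mul_one]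
    _ = adjugate u := by
      rw [← Matrix.mul_assoc, ← star_eq_conjTranspose, mem_unitaryGroup_iff'.mp hu, one_mul]

end Matrix

theorem kron2_mul (A B C D : Matrix (Fin 2) (Fin 2) ℂ) :
    kron2 A B * kron2 C D = kron2 (A * C) (B * D) := by
  simp only [kron2, reindex_apply, submatrix_mul_equiv, mul_kronecker_mul]

theorem kron2_one : kron2 1 1 = 1 := by
  simp only [kron2, one_kronecker_one, reindex_apply, submatrix_one_equiv]

theorem conjTranspose_kron2 (A B : Matrix (Fin 2) (Fin 2) ℂ) :
    (kron2 A B)ᴴ = kron2 Aᴴ Bᴴ := by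
  simp only [kron2, reindex_apply, conjTranspose_submatrix, conjTranspose_kronecker]

theorem kron2_map (f : ℂ →+* ℂ) (A B : Matrix (Fin 2) (Fin 2) ℂ) :
    (kron2 A B).map f = kron2 (A.map f) (B.map f) := by
  ext i j
  simp [kron2, kroneckerMap_apply]

theorem kron2_mem_unitaryGroup {A B : Matrix (Fin 2) (Fin 2) ℂ}
    (hA : A ∈ unitaryGroup (Fin 2) ℂ) (hB : B ∈ unitaryGroup (Fin 2) ℂ) :
    kron2 A B ∈ unitaryGroup (Fin 4) ℂ := by
  rw [mem_unitaryGroup_iff', star_eq_conjTranspose] at hA hB ⊢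
  rw [conjTranspose_kron2, kron2_mul, hA, hB, kron2_one]

noncomputable def pauliY : Matrix (Fin 2) (Fin 2) ℂ := !![0, -I; I, 0]

theorem pauliY_mul_self : pauliY * pauliY = 1 := by
  simp [pauliY, one_fin_two]

theorem conjTranspose_pauliY : pauliYᴴ = pauliY := by
  simp [pauliY, ← Matrix.ext_iff, Fin.forall_fin_two]

theorem pauliY_mul_mul_pauliY (u : Matrix (Fin 2) (Fin 2) ℂ) :
    pauliY * u * pauliY = (adjugate u)ᵀ := by
  rw [eta_fin_two u, adjugate_fin_two_of]
  simp only [pauliY, cons_mul, vecMul_cons, transpose_apply, of_apply, ← Matrix.ext_iff,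
    Fin.forall_fin_two]
  simp [mul_comm I, mul_assoc, ← sq]

theorem map_conj_eq_pauliY_mul_mul_pauliY {u : Matrix (Fin 2) (Fin 2) ℂ}
    (hu : u ∈ unitaryGroup (Fin 2) ℂ) (hdet : u.det = 1) :
    u.map (starRingEnd ℂ) = pauliY * u * pauliY := by
  rw [pauliY_mul_mul_pauliY, ← conjTranspose_eq_adjugate_of_mem_unitaryGroup hu hdet]
  rfl

noncomputable def pauliYY : Matrix (Fin 4) (Fin 4) ℂ := kron2 pauliY pauliY

theorem pauliYY_mul_self : pauliYY * pauliYY = 1 := by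
  rw [pauliYY, kron2_mul, pauliY_mul_self, kron2_one]

theorem conjTranspose_pauliYY : pauliYYᴴ = pauliYY := by
  rw [pauliYY, conjTranspose_kron2, conjTranspose_pauliY]

theorem map_conj_kron2 {u₁ u₂ : Matrix (Fin 2) (Fin 2) ℂ}
    (hu₁ : u₁ ∈ unitaryGroup (Fin 2) ℂ) (hdu₁ : u₁.det = 1)
    (hu₂ : u₂ ∈ unitaryGroup (Fin 2) ℂ) (hdu₂ : u₂.det = 1) :
    (kron2 u₁ u₂).map (starRingEnd ℂ) = pauliYY * kron2 u₁ u₂ * pauliYY := by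
  rw [kron2_map, map_conj_eq_pauliY_mul_mul_pauliY hu₁ hdu₁,
    map_conj_eq_pauliY_mul_mul_pauliY hu₂ hdu₂, pauliYY, kron2_mul, kron2_mul]

theorem ofReal_sqrt_two_sq : ((√2 : ℝ) : ℂ) ^ 2 = 2 := by
  exact_mod_cast Real.sq_sqrt zero_le_two

theorem Q_mem_unitaryGroup : Q ∈ unitaryGroup (Fin 4) ℂ := by
  rw [mem_unitaryGroup_iff', star_eq_conjTranspose]
  ext i j
  fin_cases i <;> fin_cases j <;>
    simp [Q, mul_apply, Fin.sum_univ_four, conjTranspose_apply, one_apply] <;>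
    field_simp <;> norm_num [ofReal_sqrt_two_sq]

theorem map_conj_Q : Q.map (starRingEnd ℂ) = -(pauliYY * Q) := by
  have hYY : pauliYY = !![0, 0, 0, -1; 0, 0, 1, 0; 0, 1, 0, 0; -1, 0, 0, 0] := by
    ext i j
    fin_cases i <;> fin_cases j <;>
      simp [pauliYY, pauliY, kron2, finProdFinEquiv, Fin.divNat, Fin.modNat]
  rw [hYY]
  ext i j
  fin_cases i <;> fin_cases j <;> simp [Q]

theorem map_conj_conjTranspose_Q_mul_mul_Q {K : Matrix (Fin 4) (Fin 4) ℂ}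
    (hK : K.map (starRingEnd ℂ) = pauliYY * K * pauliYY) :
    (Qᴴ * K * Q).map (starRingEnd ℂ) = Qᴴ * K * Q := by
  have hQH : Qᴴ.map (starRingEnd ℂ) = -(Qᴴ * pauliYY) := by
    rw [conjTranspose_map (starRingEnd ℂ) fun _ ↦ rfl, map_conj_Q, conjTranspose_neg,
      conjTranspose_mul, conjTranspose_pauliYY]
  calc (Qᴴ * K * Q).map (starRingEnd ℂ)
      = Qᴴ * (pauliYY * pauliYY) * K * (pauliYY * pauliYY) * Q := by
        rw [Matrix.map_mul, Matrix.map_mul, hQH, hK, map_conj_Q]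
        simp only [Matrix.neg_mul, Matrix.mul_neg, neg_neg, Matrix.mul_assoc]
    _ = Qᴴ * K * Q := by rw [pauliYY_mul_self, Matrix.mul_one, Matrix.mul_one]

/-- local single-qubit operations (elements of `SU(2) ⊗ SU(2)`) correspond
to real orthogonal matrices in the Bell basis. -/
theorem local_gates_real_orthogonal_in_bell_basis
    (u₁ u₂ : Matrix (Fin 2) (Fin 2) ℂ)
    (hu₁ : u₁ ∈ Matrix.unitaryGroup (Fin 2) ℂ) (hdu₁ : u₁.det = 1)
    (hu₂ : u₂ ∈ Matrix.unitaryGroup (Fin 2) ℂ) (hdu₂ : u₂.det = 1)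
    (M : Matrix (Fin 4) (Fin 4) ℂ) (hM : M = Qᴴ * kron2 u₁ u₂ * Q) :
    (∀ i j, (M i j).im = 0) ∧ Mᵀ * M = 1 := by
  have hreal : M.map (starRingEnd ℂ) = M := by
    rw [hM]
    exact map_conj_conjTranspose_Q_mul_mul_Q (map_conj_kron2 hu₁ hdu₁ hu₂ hdu₂)
  have hunitary : M ∈ unitaryGroup (Fin 4) ℂ := by
    rw [hM, ← star_eq_conjTranspose]
    exact mul_mem (mul_mem (Unitary.star_mem Q_mem_unitaryGroup)
      (kron2_mem_unitaryGroup hu₁ hu₂)) Q_mem_unitaryGroup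
  refine ⟨fun i j ↦ conj_eq_iff_im.mp (congrFun₂ hreal i j), ?_⟩
  rw [transpose_eq_conjTranspose_of_map_star_eq hreal, ← star_eq_conjTranspose]
  exact mem_unitaryGroup_iff'.mp hunitary
end

section
/- Let n ≥ 1, ħ > 0, and let H : ℝ → (n×n Hermitian complex matrices), E₀ : ℝ → ℝ, v : ℝ → ℂⁿ and φ : ℝ → ℝ be functions such that v and φ are differentiable, ‖v(t)‖ = 1 for all t, H(t) v(t) = E₀(t) v(t) for all t, and the curve ψ(t) = e^{iφ(t)} v(t) satisfies the Schrödinger equation iħ ψ'(t) = H(t) ψ(t). Then for all t: φ'(t) = i⟨v(t), v'(t)⟩ − E₀(t)/ħ (as complex numbers; note i⟨v(t), v'(t)⟩ is real since ‖v(t)‖ is constant). Equivalently, the total phase splits into the Berry (geometric) phase with derivative i⟨v, v'⟩ and the dynamical phase with derivative −E₀/ħ. -/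
open Complex

/-! The Schrödinger equation for `ψ = e^{iφ} v` reads `iħ e^{iφ} (v' + iφ' v) = e^{iφ} E₀ v`, because
`v` is an eigenvector of `H`. Cancelling the nonzero phase and pairing with the unit vector `v`
gives `iħ (⟨v, v'⟩ + iφ') = E₀`, which is solved for `φ'`. -/

theorem HasDerivAt.cexp_mul_I_smul {F : Type*} [NormedAddCommGroup F] [NormedSpace ℂ F]
    {φ : ℝ → ℝ} {v : ℝ → F} {φ' : ℝ} {v' : F} {t : ℝ}
    (hφ : HasDerivAt φ φ' t) (hv : HasDerivAt v v' t) :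
    HasDerivAt (fun s => Complex.exp (I * φ s) • v s)
      (Complex.exp (I * φ t) • (v' + (I * φ') • v t)) t := by
  have hphase :
      HasDerivAt (fun s => Complex.exp (I * φ s)) (Complex.exp (I * φ t) * (I * φ')) t :=
    (hφ.ofReal_comp.const_mul I).cexp
  exact (hphase.smul hv).congr_deriv (by rw [smul_add, smul_smul, add_comm])

theorem eq_I_mul_inner_sub_div_of_smul_eq {E : Type*} [NormedAddCommGroup E]
    [InnerProductSpace ℂ E] {v w : E} {ħ e p : ℂ} (hv : ‖v‖ = 1) (hħ : ħ ≠ 0)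
    (h : (I * ħ) • (w + (I * p) • v) = e • v) :
    p = I * inner ℂ v w - e / ħ := by
  have hvv : inner ℂ v v = (1 : ℂ) := by
    rw [inner_self_eq_norm_sq_to_K, hv]
    norm_num
  have hproj : I * ħ * (inner ℂ v w + I * p) = e := by
    simpa only [inner_smul_right, inner_add_right, hvv, mul_one] using congrArg (inner ℂ v) h
  rw [eq_sub_iff_add_eq, ← hproj]
  field_simp
  linear_combination p * I_sq

theorem berry_phase_decomposition_general
    (n : ℕ) (hbar : ℝ) (hb : 0 < hbar)
    (H : ℝ → Matrix (Fin n) (Fin n) ℂ)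
    (E₀ : ℝ → ℝ) (v : ℝ → EuclideanSpace ℂ (Fin n)) (φ : ℝ → ℝ)
    (hv : Differentiable ℝ v) (hφ : Differentiable ℝ φ)
    (hnorm : ∀ t, ‖v t‖ = 1)
    (heig : ∀ t, Matrix.toEuclideanLin (H t) (v t) = (E₀ t : ℂ) • v t)
    (hSE : ∀ t, (Complex.I * (hbar : ℂ)) •
        deriv (fun s => Complex.exp (Complex.I * (φ s : ℂ)) • v s) t =
      Matrix.toEuclideanLin (H t) (Complex.exp (Complex.I * (φ t : ℂ)) • v t)) :
    ∀ t, ((deriv φ t : ℝ) : ℂ) =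
      Complex.I * (inner ℂ (v t) (deriv v t) : ℂ) - ((E₀ t / hbar : ℝ) : ℂ) := by
  intro t
  have hSE_t := hSE t
  rw [((hφ t).hasDerivAt.cexp_mul_I_smul (hv t).hasDerivAt).deriv, map_smul, heig t,
    smul_comm] at hSE_t
  have hcancelled := smul_right_injective _ (exp_ne_zero (I * φ t)) hSE_t
  rw [eq_I_mul_inner_sub_div_of_smul_eq (hnorm t) (ofReal_ne_zero.mpr hb.ne') hcancelled]
  push_cast
  rfl

/-- splitting of the phase of an adiabatic eigenstate into the Berry
(geometric) phase and the dynamical phase. If `ψ(t) = e^{iφ(t)} v(t)` solves the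
Schrödinger equation `ihbarψ' = H(t)ψ` with `v(t)` a unit eigenvector of the Hermitian
matrix `H(t)` with eigenvalue `E₀(t)`, then `φ'(t) = i⟨v(t), v'(t)⟩ − E₀(t)/hbar`. -/
theorem berry_phase_decomposition
    (n : ℕ) (hn : 1 ≤ n) (hbar : ℝ) (hb : 0 < hbar)
    (H : ℝ → Matrix (Fin n) (Fin n) ℂ) (hHerm : ∀ t, (H t).IsHermitian)
    (E₀ : ℝ → ℝ) (v : ℝ → EuclideanSpace ℂ (Fin n)) (φ : ℝ → ℝ)
    (hv : Differentiable ℝ v) (hφ : Differentiable ℝ φ)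
    (hnorm : ∀ t, ‖v t‖ = 1)
    (heig : ∀ t, Matrix.toEuclideanLin (H t) (v t) = (E₀ t : ℂ) • v t)
    (hSE : ∀ t, (Complex.I * (hbar : ℂ)) •
        deriv (fun s => Complex.exp (Complex.I * (φ s : ℂ)) • v s) t =
      Matrix.toEuclideanLin (H t) (Complex.exp (Complex.I * (φ t : ℂ)) • v t)) :
    ∀ t, ((deriv φ t : ℝ) : ℂ) =
      Complex.I * (inner ℂ (v t) (deriv v t) : ℂ) - ((E₀ t / hbar : ℝ) : ℂ) :=
  berry_phase_decomposition_general n hbar hb H E₀ v φ hv hφ hnorm heig hSE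
end
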